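/- arXiv:1907.03686 — 7 statements merged into one kernel-verified Lean document; each statement's English description precedes it below -/
import Mathlib

section
/- Let w be a weight structure on a triangulated category C. Then C_{w≥0} equals the class of objects Y such that Hom(X, Y) = 0 for all X ∈ C_{w≤-1}, and C_{w≤0} equals the class of objects X such that Hom(X, Y) = 0 for all Y ∈ C_{w≥1}. -/
open CategoryTheory Category Limits Pretriangulated ZeroObject Opposite

universe v u u₂ v₂

variable (C : Type u) [Category.{v} C] [Preadditive C] [HasZeroObject C]
  [HasShift C ℤ] [∀ n : ℤ, (CategoryTheory.shiftFunctor C n).Additive] [Pretriangulated C]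

/-- `X` is a retract (direct summand) of `Y`. -/
def IsRetract {C : Type u} [Category.{v} C] (X Y : C) : Prop :=
  ∃ (s : X ⟶ Y) (r : Y ⟶ X), s ≫ r = 𝟙 X

/-- A weight structure on a pretriangulated category `C`, in the homological convention:
`le` is the class `C_{w≤0}` and `ge` is the class `C_{w≥0}`. -/
structure WeightStructure where
  le : Set C
  ge : Set C
  le_retract : ∀ ⦃X Y : C⦄, IsRetract X Y → Y ∈ le → X ∈ le
  ge_retract : ∀ ⦃X Y : C⦄, IsRetract X Y → Y ∈ ge → X ∈ ge
  le_shift : ∀ X : C, X ∈ le → X⟦(-1 : ℤ)⟧ ∈ le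
  ge_shift : ∀ X : C, X ∈ ge → X⟦(1 : ℤ)⟧ ∈ ge
  orth : ∀ ⦃X Y : C⦄, X ∈ le → Y ∈ ge → ∀ f : X ⟶ Y⟦(1 : ℤ)⟧, f = 0
  decomp : ∀ M : C, ∃ (L R : C) (f : L ⟶ M) (g : M ⟶ R) (h : R ⟶ L⟦(1 : ℤ)⟧),
    Triangle.mk f g h ∈ (distTriang C) ∧ L ∈ le ∧ R⟦(-1 : ℤ)⟧ ∈ ge

/-- A t-structure on a pretriangulated category `C`, in the homological convention:
`le` is the class `C_{t≤0}` and `ge` is the class `C_{t≥0}`. -/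
structure HomTStructure where
  le : Set C
  ge : Set C
  le_iso : ∀ ⦃X Y : C⦄, (X ≅ Y) → Y ∈ le → X ∈ le
  ge_iso : ∀ ⦃X Y : C⦄, (X ≅ Y) → Y ∈ ge → X ∈ ge
  le_shift : ∀ X : C, X ∈ le → X⟦(-1 : ℤ)⟧ ∈ le
  ge_shift : ∀ X : C, X ∈ ge → X⟦(1 : ℤ)⟧ ∈ ge
  orth : ∀ ⦃X Y : C⦄, X⟦(-1 : ℤ)⟧ ∈ ge → Y ∈ le → ∀ f : X ⟶ Y, f = 0
  decomp : ∀ M : C, ∃ (L R : C) (f : L ⟶ M) (g : M ⟶ R) (h : R ⟶ L⟦(1 : ℤ)⟧),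
    Triangle.mk f g h ∈ (distTriang C) ∧ L ∈ ge ∧ R⟦(1 : ℤ)⟧ ∈ le

/-- A contravariant additive functor is cohomological if it sends distinguished
triangles to exact sequences. -/
def IsCohomological {A : Type u₂} [Category.{v₂} A] [Abelian A]
    (H : Cᵒᵖ ⥤ A) [H.Additive] : Prop :=
  ∀ (T : Triangle C), ∀ hT : T ∈ distTriang C,
    (ShortComplex.mk (H.map T.mor₂.op) (H.map T.mor₁.op) (by
      rw [← H.map_comp, ← op_comp, comp_distTriang_mor_zero₁₂ _ hT, op_zero, H.map_zero])).Exact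

/-! One inclusion of each equality is orthogonality. For the other, an object orthogonal to the
relevant class has a weight decomposition with a vanishing map, and a distinguished triangle with
a vanishing map exhibits its middle term as a retract of a neighbour, which lies in the class. -/

lemma CategoryTheory.Retract.isRetract {D : Type u} [Category.{v} D] {X Y : D}
    (h : Retract X Y) : IsRetract X Y :=
  ⟨h.i, h.r, h.retract⟩

section

variable {C}

namespace CategoryTheory.Pretriangulated.Triangle

variable {T : Triangle C} (hT : T ∈ distTriang C)
include hT

lemma isRetract₂₃_of_mor₁_eq_zero (h : T.mor₁ = 0) : IsRetract T.obj₂ T.obj₃ := by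
  obtain ⟨r, hr⟩ := T.yoneda_exact₂ hT (𝟙 T.obj₂) (by rw [h, zero_comp])
  exact ⟨T.mor₂, r, hr.symm⟩

lemma isRetract₂₁_of_mor₂_eq_zero (h : T.mor₂ = 0) : IsRetract T.obj₂ T.obj₁ := by
  obtain ⟨s, hs⟩ := T.coyoneda_exact₂ hT (𝟙 T.obj₂) (by rw [h, comp_zero])
  exact ⟨s, T.mor₁, hs.symm⟩

end CategoryTheory.Pretriangulated.Triangle

namespace WeightStructure

variable (w : WeightStructure C)

lemma le_of_iso {X Y : C} (e : X ≅ Y) (hY : Y ∈ w.le) : X ∈ w.le :=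
  w.le_retract e.retract.isRetract hY

lemma eq_zero_of_shift_mem_le {X Y : C} (hX : X⟦(1 : ℤ)⟧ ∈ w.le) (hY : Y ∈ w.ge)
    (f : X ⟶ Y) : f = 0 :=
  (shiftFunctor C (1 : ℤ)).map_injective <| by
    rw [w.orth hX hY ((shiftFunctor C (1 : ℤ)).map f), Functor.map_zero]

lemma eq_zero_of_shift_mem_ge {X Y : C} (hX : X ∈ w.le) (hY : Y⟦(-1 : ℤ)⟧ ∈ w.ge)
    (f : X ⟶ Y) : f = 0 := by
  let e : Y ≅ Y⟦(-1 : ℤ)⟧⟦(1 : ℤ)⟧ := ((shiftEquiv C (1 : ℤ)).counitIso.app Y).symm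
  rw [← cancel_mono e.hom, w.orth hX hY (f ≫ e.hom), zero_comp]

lemma mem_le_of_forall_eq_zero {X : C}
    (hX : ∀ Y : C, Y⟦(-1 : ℤ)⟧ ∈ w.ge → ∀ f : X ⟶ Y, f = 0) : X ∈ w.le := by
  obtain ⟨L, R, f, g, h, hT, hL, hR⟩ := w.decomp X
  exact w.le_retract (Triangle.isRetract₂₁_of_mor₂_eq_zero hT (hX R hR g)) hL

/-- Decompose `Y⟦1⟧` rather than `Y`: the first map of the decomposition is then the shift of a
map `L⟦-1⟧ ⟶ Y` out of an object whose shift lies in `w.le`. -/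
lemma mem_ge_of_forall_eq_zero {Y : C}
    (hY : ∀ X : C, X⟦(1 : ℤ)⟧ ∈ w.le → ∀ f : X ⟶ Y, f = 0) : Y ∈ w.ge := by
  obtain ⟨L, R, f, g, h, hT, hL, hR⟩ := w.decomp (Y⟦(1 : ℤ)⟧)
  let eL : L⟦(-1 : ℤ)⟧⟦(1 : ℤ)⟧ ≅ L := (shiftEquiv C (1 : ℤ)).counitIso.app L
  let eY : Y ≅ Y⟦(1 : ℤ)⟧⟦(-1 : ℤ)⟧ := (shiftEquiv C (1 : ℤ)).unitIso.app Y
  have hf : f = 0 := (shiftFunctor C (-1 : ℤ)).map_injective <| by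
    rw [Functor.map_zero, ← cancel_mono eY.inv, zero_comp]
    exact hY _ (w.le_of_iso eL hL) _
  obtain ⟨s, r, hsr⟩ := Triangle.isRetract₂₃_of_mor₁_eq_zero hT hf
  exact w.ge_retract (eY.retract.trans (Retract.map ⟨s, r, hsr⟩ _)).isRetract hR

end WeightStructure

end

/-- The classes of a weight structure are each other's Hom-orthogonals. -/
theorem weight_classes_are_orthogonals (w : WeightStructure C) :
    w.ge = {Y : C | ∀ X : C, X⟦(1 : ℤ)⟧ ∈ w.le → ∀ f : X ⟶ Y, f = 0} ∧
    w.le = {X : C | ∀ Y : C, Y⟦(-1 : ℤ)⟧ ∈ w.ge → ∀ f : X ⟶ Y, f = 0} :=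
  ⟨Set.ext fun _ => ⟨fun hY _ hX => w.eq_zero_of_shift_mem_le hX hY, w.mem_ge_of_forall_eq_zero⟩,
    Set.ext fun _ => ⟨fun hX _ hY => w.eq_zero_of_shift_mem_ge hX hY, w.mem_le_of_forall_eq_zero⟩⟩
end

section
/- Let v and w be two weight structures on a triangulated category C such that C_{w≤0} ⊆ C_{v≤0} and C_{w≥0} ⊆ C_{v≥0}. Then v = w, i.e., both inclusions are equalities. -/
open CategoryTheory Category Limits Pretriangulated ZeroObject Opposite

universe v u u₂ v₂

variable (C : Type u) [Category.{v} C] [Preadditive C] [HasZeroObject C]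
  [HasShift C ℤ] [∀ n : ℤ, (CategoryTheory.shiftFunctor C n).Additive] [Pretriangulated C]

/-!
Each half of a weight structure is the orthogonal of the other half: an object orthogonal to
one half has a weight decomposition in which one of the two maps vanishes, which exhibits it as
a retract of a member of the other half. Since `v` is orthogonal as well, neither half of `w`
can be enlarged to the corresponding half of `v`.
-/

lemma IsRetract.of_iso {D : Type*} [Category D] {X X' Y : D} (e : X ≅ X')
    (h : IsRetract X' Y) : IsRetract X Y := by
  obtain ⟨s, r, hsr⟩ := h
  exact ⟨e.hom ≫ s, r ≫ e.inv, by simp [reassoc_of% hsr]⟩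

lemma IsRetract.shift {D : Type*} [Category D] [HasShift D ℤ] {X Y : D} (n : ℤ)
    (h : IsRetract X Y) : IsRetract (X⟦n⟧) (Y⟦n⟧) := by
  obtain ⟨s, r, hsr⟩ := h
  exact ⟨s⟦n⟧', r⟦n⟧', by rw [← Functor.map_comp, hsr, CategoryTheory.Functor.map_id]⟩

namespace WeightStructure

variable {C}

/-- In a weight decomposition `L → X → R`, the map `X → R ≅ R⟦-1⟧⟦1⟧` vanishes,
so `X` is a retract of `L`. -/
lemma mem_le_of_orth (w : WeightStructure C) {X : C}
    (hX : ∀ ⦃Y : C⦄, Y ∈ w.ge → ∀ f : X ⟶ Y⟦(1 : ℤ)⟧, f = 0) : X ∈ w.le := by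
  obtain ⟨L, R, f, g, h, hT, hL, hR⟩ := w.decomp X
  have hg : g = 0 := by
    let e : R⟦(-1 : ℤ)⟧⟦(1 : ℤ)⟧ ≅ R := (shiftFunctorCompIsoId C (-1) 1 (by norm_num)).app R
    rw [← cancel_mono e.inv, zero_comp]
    exact hX hR _
  obtain ⟨s, hs⟩ := Triangle.coyoneda_exact₂ _ hT (𝟙 X) (by rw [hg]; exact comp_zero)
  exact w.le_retract ⟨s, f, hs.symm⟩ hL

/-- In a weight decomposition `L → X⟦1⟧ → R`, the map `L → X⟦1⟧` vanishes,
so `X ≅ X⟦1⟧⟦-1⟧` is a retract of `R⟦-1⟧`. -/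
lemma mem_ge_of_orth (w : WeightStructure C) {X : C}
    (hX : ∀ ⦃L : C⦄, L ∈ w.le → ∀ f : L ⟶ X⟦(1 : ℤ)⟧, f = 0) : X ∈ w.ge := by
  obtain ⟨L, R, f, g, h, hT, hL, hR⟩ := w.decomp (X⟦(1 : ℤ)⟧)
  obtain ⟨r, hr⟩ := Triangle.yoneda_exact₂ _ hT (𝟙 _) (by rw [hX hL f]; exact zero_comp)
  have e : X ≅ X⟦(1 : ℤ)⟧⟦(-1 : ℤ)⟧ := ((shiftFunctorCompIsoId C 1 (-1) (by norm_num)).app X).symm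
  exact w.ge_retract ((IsRetract.shift (-1) ⟨g, r, hr.symm⟩).of_iso e) hR

end WeightStructure

/-- A weight structure whose classes are contained in those of another weight structure
coincides with it. -/
theorem weightStructure_unique (w v : WeightStructure C)
    (h1 : w.le ⊆ v.le) (h2 : w.ge ⊆ v.ge) :
    w.le = v.le ∧ w.ge = v.ge :=
  ⟨h1.antisymm fun _ hX => w.mem_le_of_orth fun _ hY => v.orth hX (h2 hY),
    h2.antisymm fun _ hX => w.mem_ge_of_orth fun _ hL => v.orth (h1 hL) hX⟩
end

section
/- Let w be a weight structure on a triangulated category C and let H : C^op → A be a cohomological functor into an abelian category A. For n ∈ ℤ define the virtual t-truncation τ_{≤n}(H) by M ↦ Im(H(w_{≤n+1}M) → H(w_{≤n}M)), using any choices of weight truncations and the connecting morphism extending id_M. Then τ_{≤n}(H)(M) is independent of the choices up to canonical isomorphism and is functorial in M. -/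
open CategoryTheory Category Limits Pretriangulated ZeroObject Opposite

universe v u u₂ v₂

variable (C : Type u) [Category.{v} C] [Preadditive C] [HasZeroObject C]
  [HasShift C ℤ] [∀ n : ℤ, (CategoryTheory.shiftFunctor C n).Additive] [Pretriangulated C]

/-!
If `j₁, j₀` extend `g : M ⟶ M'` to the `(n+1)`- and `n`-weight decompositions, then
`e ≫ j₁ - j₀ ≫ e'` vanishes after composing with `w_{≤n+1}M' ⟶ M'`, so it factors through
`(w_{≥n+2}M')[-1]`; maps from `w_{≤n}M` to that object vanish by orthogonality. Hence
`e ≫ j₁ = j₀ ≫ e'` for every choice of extensions, which exist by the same orthogonality, and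
applying `H` yields one square and thus one map `Im H(e') ⟶ Im H(e)`.
-/

namespace WeightStructure

variable {C}
variable (w : WeightStructure C)

lemma hom_eq_zero {X Y : C} {a b : ℤ} (hab : b + 1 = a)
    (hX : X⟦a⟧ ∈ w.le) (hY : Y⟦b⟧ ∈ w.ge) (f : X ⟶ Y) : f = 0 := by
  apply (shiftFunctor C a).map_injective
  have h := w.orth hX hY ((shiftFunctor C a).map f ≫ (shiftFunctorAdd' C b 1 a hab).hom.app Y)
  rw [Functor.map_zero, ← cancel_mono ((shiftFunctorAdd' C b 1 a hab).hom.app Y), h, zero_comp]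

lemma shift_shift_mem_ge {Y : C} {a b c : ℤ} (h : a + b = c) (hY : Y⟦c⟧ ∈ w.ge) :
    (Y⟦a⟧)⟦b⟧ ∈ w.ge :=
  w.ge_retract ⟨((shiftFunctorAdd' C a b c h).app Y).inv,
    ((shiftFunctorAdd' C a b c h).app Y).hom, Iso.inv_hom_id _⟩ hY

/-- For `a = -m`: `P ∈ C_{w≤0}[m]` and the triangle is an `m`-weight decomposition of `M`. -/
lemma exists_lift_of_distTriang {P L M R : C} {f : L ⟶ M} {g : M ⟶ R} {h : R ⟶ L⟦(1 : ℤ)⟧}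
    (hT : Triangle.mk f g h ∈ distTriang C) {a b : ℤ} (hab : b + 1 = a)
    (hP : P⟦a⟧ ∈ w.le) (hR : R⟦b⟧ ∈ w.ge) (x : P ⟶ M) : ∃ j : P ⟶ L, x = j ≫ f :=
  Triangle.coyoneda_exact₂ _ hT x (w.hom_eq_zero hab hP hR _)

/-- For `a = -m`: `P ∈ C_{w≤0}[m]` and the triangle is an `(m+1)`-weight decomposition of `M`. -/
lemma lift_unique_of_distTriang {P L M R : C} {f : L ⟶ M} {g : M ⟶ R} {h : R ⟶ L⟦(1 : ℤ)⟧}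
    (hT : Triangle.mk f g h ∈ distTriang C) {a b : ℤ} (hab : b + 2 = a)
    (hP : P⟦a⟧ ∈ w.le) (hR : R⟦b⟧ ∈ w.ge) {j j' : P ⟶ L} (hj : j ≫ f = j' ≫ f) : j = j' := by
  have hR' : (R⟦(-1 : ℤ)⟧)⟦b + 1⟧ ∈ w.ge := w.shift_shift_mem_ge (by ring) hR
  have hzero : (j - j') ≫ f = 0 := by rw [Preadditive.sub_comp, hj, sub_self]
  obtain ⟨k, hk⟩ := Triangle.coyoneda_exact₂ _ (inv_rot_of_distTriang _ hT) (j - j') hzero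
  have hk0 : k = 0 := w.hom_eq_zero (by omega) hP hR' k
  rw [hk0, zero_comp] at hk
  exact sub_eq_zero.mp hk

end WeightStructure

lemma existsUnique_image_hom_of_comm {A : Type u₂} [Category.{v₂} A] [HasImages A]
    [HasImageMaps A] [HasEqualizers A] {X Y X' Y' : A} (u : X ⟶ Y) (v : X' ⟶ Y')
    {I J : Type*} (α : I → (X ⟶ X')) (β : J → (Y ⟶ Y')) (p : I → Prop) (q : J → Prop)
    (hp : ∃ i, p i) (hq : ∃ j, q j) (hcomm : ∀ i j, p i → q j → α i ≫ v = u ≫ β j) :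
    ∃! θ : image u ⟶ image v, ∀ i j, p i → q j →
      factorThruImage u ≫ θ = α i ≫ factorThruImage v ∧ θ ≫ image.ι v = image.ι u ≫ β j := by
  obtain ⟨i₀, hi₀⟩ := hp
  obtain ⟨j₀, hj₀⟩ := hq
  have hι : ∀ j, q j → image.ι u ≫ β j₀ = image.ι u ≫ β j := fun j hj => by
    rw [← cancel_epi (factorThruImage u), image.fac_assoc, image.fac_assoc,
      ← hcomm i₀ j₀ hi₀ hj₀, hcomm i₀ j hi₀ hj]
  refine ⟨image.map (Arrow.homMk' _ _ (hcomm i₀ j₀ hi₀ hj₀)), fun i j hi hj => ?_, ?_⟩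
  · have hmap := (image.map_homMk'_ι (hcomm i₀ j₀ hi₀ hj₀)).trans (hι j hj)
    refine ⟨?_, hmap⟩
    rw [← cancel_mono (image.ι v), assoc, hmap, image.fac_assoc, assoc, image.fac, hcomm i j hi hj]
  · intro θ hθ
    rw [← cancel_mono (image.ι v), (hθ i₀ j₀ hi₀ hj₀).2, image.map_homMk'_ι]

theorem virtual_truncation_welldefined_functorial
    {A : Type u₂} [Category.{v₂} A] [Abelian A]
    (w : WeightStructure C) (H : Cᵒᵖ ⥤ A)
    (n : ℤ) (M M' : C) (gMM : M ⟶ M')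
    -- an (n+1)-weight decomposition of M
    (P₁ : C) (a₁ : P₁ ⟶ M)
    (hP₁ : P₁⟦(-(n + 1) : ℤ)⟧ ∈ w.le)
    -- an n-weight decomposition of M
    (P₀ : C) (a₀ : P₀ ⟶ M)
    (hP₀ : P₀⟦(-n : ℤ)⟧ ∈ w.le)
    -- a connecting morphism extending id_M
    (e : P₀ ⟶ P₁) (he : e ≫ a₁ = a₀)
    -- an (n+1)-weight decomposition of M'
    (P₁' Q₁' : C) (a₁' : P₁' ⟶ M') (b₁' : M' ⟶ Q₁') (c₁' : Q₁' ⟶ P₁'⟦(1 : ℤ)⟧)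
    (hT₁' : Triangle.mk a₁' b₁' c₁' ∈ (distTriang C))
    (hQ₁' : Q₁'⟦(-(n + 2) : ℤ)⟧ ∈ w.ge)
    -- an n-weight decomposition of M'
    (P₀' Q₀' : C) (a₀' : P₀' ⟶ M') (b₀' : M' ⟶ Q₀') (c₀' : Q₀' ⟶ P₀'⟦(1 : ℤ)⟧)
    (hT₀' : Triangle.mk a₀' b₀' c₀' ∈ (distTriang C))
    (hQ₀' : Q₀'⟦(-(n + 1) : ℤ)⟧ ∈ w.ge)
    -- a connecting morphism extending id_M'
    (e' : P₀' ⟶ P₁') (he' : e' ≫ a₁' = a₀') :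
    ∃! θ : image (H.map e'.op) ⟶ image (H.map e.op),
      ∀ (j₁ : P₁ ⟶ P₁') (j₀ : P₀ ⟶ P₀'),
        a₁ ≫ gMM = j₁ ≫ a₁' → a₀ ≫ gMM = j₀ ≫ a₀' →
        (factorThruImage (H.map e'.op) ≫ θ = H.map j₁.op ≫ factorThruImage (H.map e.op) ∧
         θ ≫ image.ι (H.map e.op) = image.ι (H.map e'.op) ≫ H.map j₀.op) := by
  have hcomm : ∀ (j₁ : P₁ ⟶ P₁') (j₀ : P₀ ⟶ P₀'),
      a₁ ≫ gMM = j₁ ≫ a₁' → a₀ ≫ gMM = j₀ ≫ a₀' → e ≫ j₁ = j₀ ≫ e' := fun j₁ j₀ h₁ h₀ =>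
    w.lift_unique_of_distTriang hT₁' (by ring) hP₀ hQ₁' (by
      rw [assoc, ← h₁, reassoc_of% he, h₀, assoc, he'])
  refine existsUnique_image_hom_of_comm _ _ (fun j₁ => H.map j₁.op) (fun j₀ => H.map j₀.op)
    _ _ (w.exists_lift_of_distTriang hT₁' (by ring) hP₁ hQ₁' _)
    (w.exists_lift_of_distTriang hT₀' (by ring) hP₀ hQ₀' _) fun j₁ j₀ h₁ h₀ => ?_
  rw [← H.map_comp, ← H.map_comp, ← op_comp, ← op_comp, hcomm j₁ j₀ h₁ h₀]
end

section
/- Let w be a weight structure on a triangulated category C and let H' and H'' be cohomological functors from C into an abelian category A, where H' is of weight range ≥ n and H'' is of weight range ≤ n-1. Then every natural transformation H' → H'' is zero. -/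
open CategoryTheory Category Limits Pretriangulated ZeroObject Opposite

universe v u u₂ v₂

variable (C : Type u) [Category.{v} C] [Preadditive C] [HasZeroObject C]
  [HasShift C ℤ] [∀ n : ℤ, (CategoryTheory.shiftFunctor C n).Additive] [Pretriangulated C]

/-- There are no nonzero natural transformations from a cohomological functor of weight
range ≥ n to one of weight range ≤ n-1. -/
theorem no_transformations_of_weight_ranges
    {A : Type u₂} [Category.{v₂} A] [Abelian A]
    (w : WeightStructure C) (n : ℤ)
    (H' H'' : Cᵒᵖ ⥤ A) [H'.Additive] [H''.Additive]
    (hc' : IsCohomological C H') (hc'' : IsCohomological C H'')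
    (hw' : ∀ X : C, X⟦(1 - n : ℤ)⟧ ∈ w.le → IsZero (H'.obj (op X)))
    (hw'' : ∀ X : C, X⟦(-n : ℤ)⟧ ∈ w.ge → IsZero (H''.obj (op X)))
    (η : H' ⟶ H'') : η = 0 := by
  ext Xop
  obtain ⟨X, rfl⟩ : ∃ Y : C, Xop = op Y := ⟨Xop.unop, rfl⟩
  -- decompose M := X⟦1-n⟧
  obtain ⟨L, R, f, g, h, hT, hL, hR⟩ := w.decomp (X⟦(1 - n : ℤ)⟧)
  -- shift the triangle by n-1
  have hT' := Triangle.shift_distinguished _ hT (n - 1)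
  set T' := (CategoryTheory.shiftFunctor (Triangle C) (n - 1)).obj (Triangle.mk f g h) with hT'def
  have hobj₁ : T'.obj₁ = L⟦(n - 1 : ℤ)⟧ := rfl
  have hobj₂ : T'.obj₂ = (X⟦(1 - n : ℤ)⟧)⟦(n - 1 : ℤ)⟧ := rfl
  have hobj₃ : T'.obj₃ = R⟦(n - 1 : ℤ)⟧ := rfl
  -- H' vanishes on T'.obj₁
  have hz₁ : IsZero (H'.obj (op T'.obj₁)) := by
    refine hw' _ (w.le_retract ?_ hL)
    exact ⟨((shiftFunctorCompIsoId C (n - 1) (1 - n) (by ring)).app L).hom,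
      ((shiftFunctorCompIsoId C (n - 1) (1 - n) (by ring)).app L).inv, Iso.hom_inv_id _⟩
  -- H'' vanishes on T'.obj₃
  have hz₃ : IsZero (H''.obj (op T'.obj₃)) := by
    refine hw'' _ (w.ge_retract ?_ hR)
    exact ⟨((shiftFunctorAdd' C (n - 1) (-n) (-1) (by ring)).app R).inv,
      ((shiftFunctorAdd' C (n - 1) (-n) (-1) (by ring)).app R).hom, Iso.inv_hom_id _⟩
  -- the map H'(T'.mor₂.op) is epi
  have hex := hc' T' hT'
  have hmap₁ : H'.map T'.mor₁.op = 0 := hz₁.eq_of_tgt _ _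
  have hepi : Epi (H'.map T'.mor₂.op) := hex.epi_f hmap₁
  -- η vanishes on T'.obj₂
  have hη₂ : η.app (op T'.obj₂) = 0 := by
    rw [← cancel_epi (H'.map T'.mor₂.op), η.naturality, hz₃.eq_of_tgt (η.app (op T'.obj₃)) 0,
      zero_comp, comp_zero]
  -- transfer along the iso (X⟦1-n⟧)⟦n-1⟧ ≅ X
  have e := (shiftFunctorCompIsoId C (1 - n) (n - 1) (by ring)).app X
  have hnat := η.naturality e.hom.op
  have hη₂' : η.app (op ((shiftFunctor C (1 - n) ⋙ shiftFunctor C (n - 1)).obj X)) = 0 := hη₂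
  rw [hη₂', comp_zero] at hnat
  rw [NatTrans.app_zero]
  exact (cancel_mono (H''.map e.hom.op)).mp (by rw [zero_comp]; exact hnat.symm)
end

section
/- Let C and C' be full triangulated subcategories of a triangulated category D such that the Yoneda functor C' → (additive functors C^op → Ab), M ↦ Hom_D(−, M)|_C, is fully faithful ('C reflects C''). Let w be a weight structure on C. If a t-structure t on C' is right orthogonal to w (i.e., Hom_D(C_{w≤0}, C'_{t≥1}) = 0 and Hom_D(C_{w≥0}, C'_{t≤-1}) = 0), then t is strictly right orthogonal to w: C'_{t≥1} = {N ∈ C' : Hom_D(X, N) = 0 for all X ∈ C_{w≤0}} and C'_{t≤-1} = {N ∈ C' : Hom_D(X, N) = 0 for all X ∈ C_{w≥0}}. -/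
open CategoryTheory Category Limits Pretriangulated ZeroObject Opposite

universe v u u₂ v₂

variable (C : Type u) [Category.{v} C] [Preadditive C] [HasZeroObject C]
  [HasShift C ℤ] [∀ n : ℤ, (CategoryTheory.shiftFunctor C n).Additive] [Pretriangulated C]

universe u₃ u₄

variable {D : Type u₃} [Category.{v} D] [Preadditive D] [HasZeroObject D]
  [HasShift D ℤ] [∀ n : ℤ, (CategoryTheory.shiftFunctor D n).Additive] [Pretriangulated D]
variable {C' : Type u₄} [Category.{v} C'] [Preadditive C'] [HasZeroObject C']
  [HasShift C' ℤ] [∀ n : ℤ, (CategoryTheory.shiftFunctor C' n).Additive] [Pretriangulated C']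

/-- The Yoneda-type functor sending M in C' to the functor Hom_D(i(−), i'(M)) on Cᵒᵖ. -/
def restrictedYoneda (i : C ⥤ D) (i' : C' ⥤ D) : C' ⥤ Cᵒᵖ ⥤ AddCommGrpCat.{v} :=
  i' ⋙ preadditiveYoneda ⋙ (Functor.whiskeringLeft Cᵒᵖ Dᵒᵖ AddCommGrpCat.{v}).obj i.op

/-!
Because `C` reflects `C'`, a morphism `φ : M₁ ⟶ M₂` of `C'` vanishes as soon as
`u ≫ i'.map φ = 0` for every `u : i X ⟶ i' M₁`. This holds when `i' M₁` is right orthogonal to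
`C_{w≤0}` and `i' M₂` to `C_{w≥1}`: a weight decomposition `L → X → R` with `L ∈ C_{w≤0}` and
`R ∈ C_{w≥1}` makes `u` factor through `i R`. By the assumed orthogonality, objects of
`C'_{t≥1}` are of the first kind and objects of `C'_{t≤0}` of the second. Hence an `N`
orthogonal to `C_{w≤0}` is left orthogonal to `C'_{t≤0}`, so lies in `C'_{t≥1}`; and if `N` is
orthogonal to `C_{w≥0}`, then `N⟦1⟧` is right orthogonal to `C'_{t≥1}`, so lies in `C'_{t≤0}`.
-/

lemma forall_eq_zero_of_equiv {E : Type u₂} [Category.{v₂} E] [HasZeroMorphisms E]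
    {X Y X' Y' : E} (e : (X ⟶ Y) ≃ (X' ⟶ Y')) (h : ∀ f : X ⟶ Y, f = 0) (g : X' ⟶ Y') :
    g = 0 :=
  e.symm.injective ((h _).trans (h _).symm)

def shiftHomEquiv {E : Type u₂} [Category.{v₂} E] [HasShift E ℤ] (a b : ℤ) (hab : a + b = 0)
    (A B : E) : (A⟦a⟧ ⟶ B) ≃ (A ⟶ B⟦b⟧) :=
  (shiftEquiv' E a b hab).toAdjunction.homEquiv A B

lemma forall_hom_eq_zero_of_iso_shift {E : Type u₂} [Category.{v₂} E] [HasZeroMorphisms E]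
    [HasShift E ℤ] {X X' Y Y' : E} (eX : X' ≅ X⟦(-1 : ℤ)⟧) (eY : Y' ≅ Y⟦(1 : ℤ)⟧)
    (h : ∀ f : X' ⟶ Y, f = 0) (f : X ⟶ Y') : f = 0 :=
  forall_eq_zero_of_equiv ((eX.homCongr (Iso.refl Y)).trans <|
    (shiftHomEquiv (-1) 1 (by norm_num) X Y).trans ((Iso.refl X).homCongr eY.symm)) h f

namespace CategoryTheory.Pretriangulated

variable {E : Type u₂} [Category.{v₂} E] [Preadditive E] [HasZeroObject E] [HasShift E ℤ]
  [∀ n : ℤ, (CategoryTheory.shiftFunctor E n).Additive] [Pretriangulated E] {T : Triangle E}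

lemma Triangle.isIso_mor₁_of_mor₂_eq_zero (hT : T ∈ distTriang E) (h₂ : T.mor₂ = 0)
    (h : ∀ ψ : T.obj₁⟦(1 : ℤ)⟧ ⟶ T.obj₃, ψ = 0) : IsIso T.mor₁ := by
  obtain ⟨ψ, hψ⟩ := T.yoneda_exact₃ hT (𝟙 T.obj₃) (by rw [h₂, zero_comp])
  refine (T.isZero₃_iff_isIso₁ hT).1 ?_
  rw [IsZero.iff_id_eq_zero, hψ, h ψ, comp_zero]

lemma Triangle.isIso_mor₂_of_mor₁_eq_zero (hT : T ∈ distTriang E) (h₁ : T.mor₁ = 0)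
    (h : ∀ ψ : T.obj₁⟦(1 : ℤ)⟧ ⟶ T.obj₃, ψ = 0) : IsIso T.mor₂ := by
  obtain ⟨ψ, hψ⟩ := T.coyoneda_exact₁ hT (𝟙 (T.obj₁⟦(1 : ℤ)⟧))
    (by rw [h₁, Functor.map_zero, comp_zero])
  have h₁ : IsZero (T.obj₁⟦(1 : ℤ)⟧) := by
    rw [IsZero.iff_id_eq_zero, hψ, h ψ, zero_comp]
  exact (T.isZero₁_iff_isIso₂ hT).1
    (((CategoryTheory.shiftFunctor E (-1 : ℤ)).map_isZero h₁).of_iso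
      (shiftShiftNeg T.obj₁ (1 : ℤ)).symm)

end CategoryTheory.Pretriangulated

namespace HomTStructure

variable (t : HomTStructure C')

lemma mem_le_of_shift_mem_le {B : C'} (hB : B⟦(1 : ℤ)⟧ ∈ t.le) : B ∈ t.le :=
  t.le_iso (shiftShiftNeg B (1 : ℤ)).symm (t.le_shift _ hB)

lemma mem_ge_of_forall_hom_eq_zero {M : C'}
    (hM : ∀ B : C', B⟦(1 : ℤ)⟧ ∈ t.le → ∀ g : M ⟶ B, g = 0) : M ∈ t.ge := by
  obtain ⟨L, B, f, g, h, hT, hL, hB⟩ := t.decomp M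
  have : IsIso f := (Triangle.mk f g h).isIso_mor₁_of_mor₂_eq_zero hT (hM B hB g)
    fun ψ => t.orth (t.ge_iso (shiftShiftNeg L (1 : ℤ)) hL) (t.mem_le_of_shift_mem_le hB) ψ
  exact t.ge_iso (asIso f).symm hL

lemma mem_le_of_forall_hom_eq_zero {M : C'}
    (hM : ∀ A : C', A⟦(-1 : ℤ)⟧ ∈ t.ge → ∀ g : A ⟶ M, g = 0) : M ∈ t.le := by
  obtain ⟨A, B, f, g, h, hT, hA, hB⟩ := t.decomp (M⟦(-1 : ℤ)⟧)
  have hA' : A⟦(1 : ℤ)⟧⟦(-1 : ℤ)⟧ ∈ t.ge := t.ge_iso (shiftShiftNeg A (1 : ℤ)) hA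
  have hf : f = 0 :=
    forall_eq_zero_of_equiv (shiftHomEquiv 1 (-1) (by norm_num) A M) (hM _ hA') f
  have : IsIso g := (Triangle.mk f g h).isIso_mor₂_of_mor₁_eq_zero hT hf
    fun ψ => t.orth hA' (t.mem_le_of_shift_mem_le hB) ψ
  exact t.le_iso ((shiftNegShift M (1 : ℤ)).symm ≪≫ (shiftFunctor C' (1 : ℤ)).mapIso (asIso g))
    hB

end HomTStructure

lemma eq_zero_of_forall_comp_map_eq_zero {A A' B : Type*} [Category.{v} A] [Category.{v} A']
    [HasZeroMorphisms A'] [Category.{v} B] [Preadditive B] (i : A ⥤ B) (i' : A' ⥤ B)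
    [i'.PreservesZeroMorphisms] [(restrictedYoneda A i i').Faithful] {M₁ M₂ : A'} (φ : M₁ ⟶ M₂)
    (h : ∀ (X : A) (u : i.obj X ⟶ i'.obj M₁), u ≫ i'.map φ = 0) : φ = 0 := by
  apply (restrictedYoneda A i i').map_injective
  ext X u
  change u ≫ i'.map φ = u ≫ i'.map 0
  rw [Functor.map_zero]
  exact (h X.unop u).trans comp_zero.symm

section

variable {C}

lemma WeightStructure.comp_eq_zero_of_orthogonal (w : WeightStructure C) (i : C ⥤ D)
    [i.CommShift ℤ] [i.IsTriangulated] {Z Y : D}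
    (hZ : ∀ X ∈ w.le, ∀ f : i.obj X ⟶ Z, f = 0)
    (hY : ∀ X : C, X⟦(-1 : ℤ)⟧ ∈ w.ge → ∀ f : i.obj X ⟶ Y, f = 0)
    (φ : Z ⟶ Y) (X : C) (u : i.obj X ⟶ Z) : u ≫ φ = 0 := by
  obtain ⟨L, R, a, b, c, hT, hL, hR⟩ := w.decomp X
  obtain ⟨v, hv⟩ : ∃ v : i.obj R ⟶ Z, u = i.map b ≫ v :=
    Triangle.yoneda_exact₂ _ (i.map_distinguished _ hT) u (hZ L hL _)
  rw [hv, assoc, hY R hR (v ≫ φ), comp_zero]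

lemma eq_zero_of_weight_orthogonal {A' : Type*} [Category.{v} A'] [HasZeroMorphisms A']
    (i : C ⥤ D) [i.CommShift ℤ] [i.IsTriangulated] (i' : A' ⥤ D) [i'.PreservesZeroMorphisms]
    [(restrictedYoneda C i i').Faithful] (w : WeightStructure C) {M₁ M₂ : A'}
    (hM₁ : ∀ X ∈ w.le, ∀ f : i.obj X ⟶ i'.obj M₁, f = 0)
    (hM₂ : ∀ X : C, X⟦(-1 : ℤ)⟧ ∈ w.ge → ∀ f : i.obj X ⟶ i'.obj M₂, f = 0)
    (φ : M₁ ⟶ M₂) : φ = 0 :=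
  eq_zero_of_forall_comp_map_eq_zero i i' φ (w.comp_eq_zero_of_orthogonal i hM₁ hM₂ _)

end

theorem strictly_orthogonal_of_reflects
    (i : C ⥤ D) [i.CommShift ℤ] [i.IsTriangulated]
    (i' : C' ⥤ D) [i'.CommShift ℤ] [i'.IsTriangulated]
    (hfaithful : (restrictedYoneda C i i').Faithful)
    (w : WeightStructure C) (t : HomTStructure C')
    (h₁ : ∀ X ∈ w.le, ∀ N : C', N⟦(-1 : ℤ)⟧ ∈ t.ge → ∀ f : i.obj X ⟶ i'.obj N, f = 0)
    (h₂ : ∀ X ∈ w.ge, ∀ N : C', N⟦(1 : ℤ)⟧ ∈ t.le → ∀ f : i.obj X ⟶ i'.obj N, f = 0) :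
    (∀ N : C', (N⟦(-1 : ℤ)⟧ ∈ t.ge ↔
      ∀ X ∈ w.le, ∀ f : i.obj X ⟶ i'.obj N, f = 0)) ∧
    (∀ N : C', (N⟦(1 : ℤ)⟧ ∈ t.le ↔
      ∀ X ∈ w.ge, ∀ f : i.obj X ⟶ i'.obj N, f = 0)) := by
  refine ⟨fun N => ⟨fun hN X hX => h₁ X hX N hN, fun hN => ?_⟩,
    fun N => ⟨fun hN X hX => h₂ X hX N hN, fun hN => ?_⟩⟩
  · refine t.mem_ge_of_forall_hom_eq_zero fun B hB =>
      forall_eq_zero_of_equiv (shiftHomEquiv (-1) 1 (by norm_num) N B).symm ?_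
    exact eq_zero_of_weight_orthogonal i i' w hN
      fun X hX => forall_hom_eq_zero_of_iso_shift ((i.commShiftIso (-1 : ℤ)).app X)
        ((i'.commShiftIso (1 : ℤ)).app B) (h₂ _ hX B hB)
  · exact t.mem_le_of_forall_hom_eq_zero fun A hA =>
      eq_zero_of_weight_orthogonal i i' w (fun X hX => h₁ X hX A hA)
        fun X hX => forall_hom_eq_zero_of_iso_shift ((i.commShiftIso (-1 : ℤ)).app X)
          ((i'.commShiftIso (1 : ℤ)).app N) (hN _ hX)
end

section
/- Let C be a smashing triangulated category satisfying the Brown representability property (every cohomological functor C^op → Ab converting coproducts into products is representable), and let w be a smashing weight structure on C. Then there exists a t-structure t on C right adjacent to w, i.e., with C_{t≥0} = C_{w≥0}. -/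
open CategoryTheory Category Limits Pretriangulated ZeroObject Opposite

universe v u u₂ v₂

variable (C : Type u) [Category.{v} C] [Preadditive C] [HasZeroObject C]
  [HasShift C ℤ] [∀ n : ℤ, (CategoryTheory.shiftFunctor C n).Additive] [Pretriangulated C]

/-!
For `M : C` let `H_M` be the virtual t-truncation `τ_{≥0}` of `Hom(-, M)`: on `X` it is the image
of `Hom(w_{≥0} X, M) → Hom(w_{≥-1} X, M)`. Weight truncations are not functorial, but any two lifts
of a morphism agree on this image, so `H_M` is a functor; it is cohomological, and since `C_{w≥0}`
is closed under coproducts it converts coproducts into products. By Brown representability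
`H_M ≅ Hom(-, L)`, and the identity of `L` gives `L → M`. Orthogonality of weights shows that
`L ∈ C_{w≥0}`, that `Hom(T, L) → Hom(T, M)` is surjective for `T ∈ C_{w≥0}` and injective for
`T ∈ C_{w≥-1}`, so the cone `R` of `L → M` receives no morphism from `C_{w≥0}`. These triangles
are the t-decompositions of the t-structure with `C_{t≥0} = C_{w≥0}` and `C_{t≤0}` the right
orthogonal of `C_{w≥0}⟦1⟧`.
-/

variable {C} in
lemma Pretriangulated.hom_eq_zero_of_surjective_of_injective {L M R T : C} {φ : L ⟶ M}
    {g : M ⟶ R} {δ : R ⟶ L⟦(1 : ℤ)⟧} (hφ : Triangle.mk φ g δ ∈ distTriang C)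
    (hsurj : ∀ z : T ⟶ M, ∃ t, t ≫ φ = z)
    (hinj : ∀ f : T⟦(-1 : ℤ)⟧ ⟶ L, f ≫ φ = 0 → f = 0) (x : T ⟶ R) : x = 0 := by
  let e : T⟦(-1 : ℤ)⟧⟦(1 : ℤ)⟧ ≅ T := (shiftEquiv C (1 : ℤ)).counitIso.app T
  let k := (shiftFunctor C (1 : ℤ)).preimage (e.hom ≫ x ≫ δ)
  have hδφ : δ ≫ φ⟦(1 : ℤ)⟧' = 0 := comp_distTriang_mor_zero₃₁ _ hφ
  have hk : k = 0 := hinj k ((shiftFunctor C (1 : ℤ)).map_injective (by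
    rw [Functor.map_comp, Functor.map_preimage, Functor.map_zero]
    simp [hδφ]))
  have hxδ : (shiftFunctor C (1 : ℤ)).map k = e.hom ≫ x ≫ δ := Functor.map_preimage _ _
  rw [hk, Functor.map_zero, eq_comm, Preadditive.IsIso.comp_left_eq_zero] at hxδ
  obtain ⟨z, rfl⟩ : ∃ z : T ⟶ M, x = z ≫ g := Triangle.coyoneda_exact₃ _ hφ x hxδ
  obtain ⟨t, rfl⟩ := hsurj z
  have hφg : φ ≫ g = 0 := comp_distTriang_mor_zero₁₂ _ hφ
  rw [assoc, hφg, comp_zero]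

namespace WeightStructure

variable {C}

section

variable (w : WeightStructure C)

lemma mem_le_of_iso {X Y : C} (e : X ≅ Y) (h : Y ∈ w.le) : X ∈ w.le :=
  w.le_retract ⟨e.hom, e.inv, e.hom_inv_id⟩ h

lemma mem_ge_of_iso {X Y : C} (e : X ≅ Y) (h : Y ∈ w.ge) : X ∈ w.ge :=
  w.ge_retract ⟨e.hom, e.inv, e.hom_inv_id⟩ h

lemma shift_mem_ge {X : C} (h : X ∈ w.ge) {n : ℤ} (hn : 0 ≤ n) : X⟦n⟧ ∈ w.ge := by
  lift n to ℕ using hn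
  induction n with
  | zero => exact w.mem_ge_of_iso ((shiftFunctorZero C ℤ).app X) h
  | succ m ih =>
    exact w.mem_ge_of_iso ((shiftFunctorAdd' C (m : ℤ) 1 (m + 1 : ℕ) (by push_cast; ring)).app X)
      (w.ge_shift _ ih)

lemma hom_eq_zero_of_lt {X Y : C} {p q : ℤ} (hX : X⟦p⟧ ∈ w.le) (hY : Y⟦q⟧ ∈ w.ge) (hqp : q < p)
    (f : X ⟶ Y) : f = 0 := by
  let e : Y⟦p⟧ ≅ ((Y⟦q⟧)⟦p - q - 1⟧)⟦(1 : ℤ)⟧ :=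
    (shiftFunctorAdd' C q (p - q) p (by ring)).app Y ≪≫
      (shiftFunctorAdd' C (p - q - 1) 1 (p - q) (by ring)).app (Y⟦q⟧)
  have h : f⟦p⟧' ≫ e.hom = 0 := w.orth hX (w.shift_mem_ge hY (by omega)) _
  rwa [Preadditive.IsIso.comp_right_eq_zero, Functor.map_eq_zero_iff] at h

/-- A weight decomposition of `X` at level `p`: in the paper's notation `L = w_{≤ -p-1} X` and
`R = w_{≥ -p} X`. -/
structure Decomposition (p : ℤ) (X : C) where
  L : C
  R : C
  ι : L ⟶ X
  π : X ⟶ R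
  δ : R ⟶ L⟦(1 : ℤ)⟧
  distinguished : Triangle.mk ι π δ ∈ distTriang C
  mem_le : L⟦p + 1⟧ ∈ w.le
  mem_ge : R⟦p⟧ ∈ w.ge

namespace Decomposition

variable {w} {p : ℤ} {X : C}

def ofIso (d : w.Decomposition p X) {Y : C} (e : X ≅ Y) : w.Decomposition p Y where
  L := d.L
  R := d.R
  ι := d.ι ≫ e.hom
  π := e.inv ≫ d.π
  δ := d.δ
  distinguished := isomorphic_distinguished _ d.distinguished _
    (Triangle.isoMk _ _ (Iso.refl _) e.symm (Iso.refl _) (by simp [Triangle.mk])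
      (by simp [Triangle.mk]) (by simp [Triangle.mk]))
  mem_le := d.mem_le
  mem_ge := d.mem_ge

noncomputable def ofShift {q : ℤ} (d : w.Decomposition p (X⟦(1 : ℤ)⟧)) (hpq : p + 1 = q) :
    w.Decomposition q X :=
  let S := (Triangle.shiftFunctor C (-1)).obj (Triangle.mk d.ι d.π d.δ)
  ofIso
    { L := S.obj₁
      R := S.obj₃
      ι := S.mor₁
      π := S.mor₂
      δ := S.mor₃
      distinguished := Triangle.shift_distinguished _ d.distinguished (-1)
      mem_le := w.mem_le_of_iso
        ((shiftFunctorAdd' C (-1) (q + 1) (p + 1) (by omega)).symm.app d.L) d.mem_le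
      mem_ge := w.mem_ge_of_iso ((shiftFunctorAdd' C (-1) q p (by omega)).symm.app d.R) d.mem_ge }
    ((shiftEquiv C (1 : ℤ)).unitIso.app X).symm

variable (d : w.Decomposition p X)

lemma exists_desc {W : C} {q : ℤ} (hW : W⟦q⟧ ∈ w.ge) (hqp : q ≤ p) (f : X ⟶ W) :
    ∃ g : d.R ⟶ W, d.π ≫ g = f := by
  obtain ⟨g, hg⟩ := Triangle.yoneda_exact₂ _ d.distinguished f
    (w.hom_eq_zero_of_lt d.mem_le hW (by omega) _)
  exact ⟨g, hg.symm⟩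

noncomputable def desc {W : C} {q : ℤ} (hW : W⟦q⟧ ∈ w.ge) (hqp : q ≤ p) (f : X ⟶ W) : d.R ⟶ W :=
  (d.exists_desc hW hqp f).choose

@[simp]
lemma π_desc {W : C} {q : ℤ} (hW : W⟦q⟧ ∈ w.ge) (hqp : q ≤ p) (f : X ⟶ W) :
    d.π ≫ d.desc hW hqp f = f :=
  (d.exists_desc hW hqp f).choose_spec

lemma shift_L_mem_le : (d.L⟦(1 : ℤ)⟧)⟦p⟧ ∈ w.le :=
  w.mem_le_of_iso ((shiftFunctorAdd' C 1 p (p + 1) (by ring)).symm.app d.L) d.mem_le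

lemma hom_ext {W : C} {q : ℤ} (hW : W⟦q⟧ ∈ w.ge) (hqp : q < p) {g g' : d.R ⟶ W}
    (h : d.π ≫ g = d.π ≫ g') : g = g' := by
  rw [← sub_eq_zero]
  obtain ⟨e, he⟩ : ∃ e : d.L⟦(1 : ℤ)⟧ ⟶ W, g - g' = d.δ ≫ e :=
    Triangle.yoneda_exact₃ _ d.distinguished (g - g')
      (show d.π ≫ (g - g') = 0 by rw [Preadditive.comp_sub, h, sub_self])
  have he₀ : e = 0 := w.hom_eq_zero_of_lt d.shift_L_mem_le hW hqp e
  rw [he, he₀, comp_zero]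

lemma exists_δ_section (hX : X⟦p⟧ ∈ w.ge) : ∃ s : d.L⟦(1 : ℤ)⟧ ⟶ d.R, s ≫ d.δ = 𝟙 _ := by
  have hι : d.ι = 0 := w.hom_eq_zero_of_lt d.mem_le hX (by omega) _
  obtain ⟨s, hs⟩ := Triangle.coyoneda_exact₃ _ (rot_of_distTriang _ d.distinguished) (𝟙 _)
    (show 𝟙 _ ≫ (-(shiftFunctor C (1 : ℤ)).map d.ι) = 0 by
      rw [hι, Functor.map_zero, neg_zero, comp_zero])
  exact ⟨s, hs.symm⟩

end Decomposition

lemma nonempty_decomposition (X : C) : Nonempty (w.Decomposition (-1) X) := by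
  obtain ⟨L, R, f, g, h, hT, hL, hR⟩ := w.decomp X
  have hL' : L⟦(-1 + 1 : ℤ)⟧ ∈ w.le :=
    w.mem_le_of_iso ((shiftFunctorZero' C (-1 + 1 : ℤ) (by norm_num)).app L) hL
  exact ⟨⟨L, R, f, g, h, hT, hL', hR⟩⟩

noncomputable def decomp₀ (X : C) : w.Decomposition 0 X :=
  (w.nonempty_decomposition (X⟦(1 : ℤ)⟧)).some.ofShift (by norm_num)

noncomputable def decomp₁ (X : C) : w.Decomposition 1 X :=
  (w.decomp₀ (X⟦(1 : ℤ)⟧)).ofShift (by norm_num)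

lemma decomp₀_R_mem_ge (X : C) : (w.decomp₀ X).R ∈ w.ge :=
  w.mem_ge_of_iso ((shiftFunctorZero C ℤ).app _).symm (w.decomp₀ X).mem_ge

lemma mem_ge_of_hom_eq_zero {Y : C} (h : ∀ X : C, X⟦(1 : ℤ)⟧ ∈ w.le → ∀ f : X ⟶ Y, f = 0) :
    Y ∈ w.ge := by
  let d := w.decomp₀ Y
  obtain ⟨σ, hσ⟩ := Triangle.yoneda_exact₂ _ d.distinguished (𝟙 Y)
    (show d.ι ≫ 𝟙 Y = 0 by rw [comp_id]; exact h d.L (by simpa using d.mem_le) d.ι)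
  exact w.ge_retract ⟨d.π, σ, hσ.symm⟩ (w.decomp₀_R_mem_ge Y)

lemma mem_ge_of_distinguished {T : Triangle C} (hT : T ∈ distTriang C) (h₁ : T.obj₁ ∈ w.ge)
    (h₃ : T.obj₃ ∈ w.ge) : T.obj₂ ∈ w.ge := by
  refine w.mem_ge_of_hom_eq_zero fun X hX f => ?_
  obtain ⟨g, rfl⟩ := Triangle.coyoneda_exact₂ _ hT f
    (w.hom_eq_zero_of_lt hX (w.shift_mem_ge h₃ le_rfl) zero_lt_one _)
  rw [w.hom_eq_zero_of_lt hX (w.shift_mem_ge h₁ le_rfl) zero_lt_one g, zero_comp]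

noncomputable def truncComparison (X : C) : (w.decomp₁ X).R ⟶ (w.decomp₀ X).R :=
  (w.decomp₁ X).desc (w.decomp₀ X).mem_ge zero_le_one (w.decomp₀ X).π

@[simp]
lemma π_truncComparison (X : C) :
    (w.decomp₁ X).π ≫ w.truncComparison X = (w.decomp₀ X).π :=
  (w.decomp₁ X).π_desc _ _ _

noncomputable def truncMap {X Y : C} (f : X ⟶ Y) : (w.decomp₁ X).R ⟶ (w.decomp₁ Y).R :=
  (w.decomp₁ X).desc (w.decomp₁ Y).mem_ge le_rfl (f ≫ (w.decomp₁ Y).π)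

@[simp]
lemma π_truncMap {X Y : C} (f : X ⟶ Y) :
    (w.decomp₁ X).π ≫ w.truncMap f = f ≫ (w.decomp₁ Y).π :=
  (w.decomp₁ X).π_desc _ _ _

lemma truncMap_truncComparison_eq {X Y : C} (f : X ⟶ Y) :
    w.truncMap f ≫ w.truncComparison Y =
      w.truncComparison X ≫ (w.decomp₀ X).desc (w.decomp₀ Y).mem_ge le_rfl (f ≫ (w.decomp₀ Y).π) :=
  (w.decomp₁ X).hom_ext (w.decomp₀ Y).mem_ge zero_lt_one (by
    rw [← assoc, π_truncMap, assoc, π_truncComparison, ← assoc, π_truncComparison,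
      Decomposition.π_desc])

lemma truncComparison_eq_zero_of_shift_mem_le {X : C} (hX : X⟦(1 : ℤ)⟧ ∈ w.le) :
    w.truncComparison X = 0 :=
  (w.decomp₁ X).hom_ext (w.decomp₀ X).mem_ge zero_lt_one (by
    rw [π_truncComparison, comp_zero]
    exact w.hom_eq_zero_of_lt hX (w.decomp₀ X).mem_ge zero_lt_one _)

noncomputable def virtualTruncGroup (M X : C) : AddSubgroup ((w.decomp₁ X).R ⟶ M) :=
  (Preadditive.leftComp M (w.truncComparison X)).range

variable {w}

lemma mem_virtualTruncGroup {M X : C} {h : (w.decomp₁ X).R ⟶ M} :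
    h ∈ w.virtualTruncGroup M X ↔ ∃ g, w.truncComparison X ≫ g = h :=
  Iff.rfl

lemma truncComparison_comp_mem {M X : C} (g : (w.decomp₀ X).R ⟶ M) :
    w.truncComparison X ≫ g ∈ w.virtualTruncGroup M X :=
  ⟨g, rfl⟩

lemma comp_eq_truncMap_comp {M X Y : C} {f : X ⟶ Y} {c : (w.decomp₁ X).R ⟶ (w.decomp₁ Y).R}
    (hc : (w.decomp₁ X).π ≫ c = f ≫ (w.decomp₁ Y).π) {h : (w.decomp₁ Y).R ⟶ M}
    (hh : h ∈ w.virtualTruncGroup M Y) : c ≫ h = w.truncMap f ≫ h := by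
  obtain ⟨g, rfl⟩ := mem_virtualTruncGroup.1 hh
  have : c ≫ w.truncComparison Y = w.truncMap f ≫ w.truncComparison Y :=
    (w.decomp₁ X).hom_ext (w.decomp₀ Y).mem_ge zero_lt_one (by simp only [← assoc, hc, π_truncMap])
  rw [← assoc, this, assoc]

lemma truncMap_comp_mem {M X Y : C} (f : X ⟶ Y) {h : (w.decomp₁ Y).R ⟶ M}
    (hh : h ∈ w.virtualTruncGroup M Y) : w.truncMap f ≫ h ∈ w.virtualTruncGroup M X := by
  obtain ⟨g, rfl⟩ := mem_virtualTruncGroup.1 hh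
  rw [← assoc, truncMap_truncComparison_eq, assoc]
  exact truncComparison_comp_mem _

lemma eq_zero_of_π_comp_eq_zero {M X : C} (hX : X⟦(1 : ℤ)⟧ ∈ w.ge) {h : (w.decomp₁ X).R ⟶ M}
    (hh : h ∈ w.virtualTruncGroup M X) (h₀ : (w.decomp₁ X).π ≫ h = 0) : h = 0 := by
  obtain ⟨g, rfl⟩ := mem_virtualTruncGroup.1 hh
  obtain ⟨e, he⟩ : ∃ e : (w.decomp₁ X).L⟦(1 : ℤ)⟧ ⟶ M,
      w.truncComparison X ≫ g = (w.decomp₁ X).δ ≫ e :=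
    Triangle.yoneda_exact₃ _ (w.decomp₁ X).distinguished _ h₀
  obtain ⟨s, hs⟩ := (w.decomp₁ X).exists_δ_section hX
  have hs₀ : s ≫ w.truncComparison X = 0 :=
    w.hom_eq_zero_of_lt (w.decomp₁ X).shift_L_mem_le (w.decomp₀ X).mem_ge zero_lt_one _
  have he₀ : e = 0 := by rw [← id_comp e, ← hs, assoc, ← he, ← assoc, hs₀, zero_comp]
  rw [he, he₀, comp_zero]

variable (w)

noncomputable def virtualTruncMap (M : C) {X Y : C} (f : X ⟶ Y) :
    w.virtualTruncGroup M Y →+ w.virtualTruncGroup M X :=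
  AddMonoidHom.mk' (fun h => ⟨w.truncMap f ≫ h, truncMap_comp_mem f h.2⟩)
    (fun _ _ => Subtype.ext (Preadditive.comp_add _ _ _ _ _ _))

@[simp]
lemma coe_virtualTruncMap (M : C) {X Y : C} (f : X ⟶ Y) (h : w.virtualTruncGroup M Y) :
    (w.virtualTruncMap M f h : (w.decomp₁ X).R ⟶ M) = w.truncMap f ≫ h :=
  rfl

noncomputable def virtualTrunc (M : C) : Cᵒᵖ ⥤ AddCommGrpCat.{v} where
  obj X := AddCommGrpCat.of (w.virtualTruncGroup M X.unop)
  map f := AddCommGrpCat.ofHom (w.virtualTruncMap M f.unop)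
  map_id X := by
    ext h
    exact ((comp_eq_truncMap_comp (f := 𝟙 X.unop) (c := 𝟙 _) (by simp) h.2).symm.trans
      (id_comp _) :)
  map_comp f g := by
    ext h
    exact ((comp_eq_truncMap_comp (f := g.unop ≫ f.unop)
      (c := w.truncMap g.unop ≫ w.truncMap f.unop)
      (by rw [← assoc, π_truncMap, assoc, π_truncMap, ← assoc]) h.2).symm.trans (assoc _ _ _) :)

instance (M : C) : (w.virtualTrunc M).Additive where
  map_add {_ _ f g} := by
    ext h
    exact Subtype.ext ((comp_eq_truncMap_comp (f := f.unop + g.unop)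
      (c := w.truncMap f.unop + w.truncMap g.unop)
      (by simp only [Preadditive.comp_add, Preadditive.add_comp, π_truncMap]) h.2).symm.trans
      (Preadditive.add_comp _ _ _ _ _ _))

end

section

variable {w : WeightStructure C}

lemma exists_truncMap_comp_eq_of_distinguished {M : C} {T : Triangle C} (hT : T ∈ distTriang C)
    {h : (w.decomp₁ T.obj₂).R ⟶ M} (hh : h ∈ w.virtualTruncGroup M T.obj₂)
    (h₀ : w.truncMap T.mor₁ ≫ h = 0) :
    ∃ h' ∈ w.virtualTruncGroup M T.obj₃, w.truncMap T.mor₂ ≫ h' = h := by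
  obtain ⟨g, rfl⟩ := mem_virtualTruncGroup.1 hh
  obtain ⟨Q, q, δ, hQ⟩ :=
    distinguished_cocone_triangle (w.truncMap T.mor₁ ≫ w.truncComparison T.obj₂)
  obtain ⟨g', hg'⟩ : ∃ g' : Q ⟶ M, g = q ≫ g' :=
    Triangle.yoneda_exact₂ _ hQ g
      (show (w.truncMap T.mor₁ ≫ w.truncComparison T.obj₂) ≫ g = 0 by rw [assoc]; exact h₀)
  have hQ_ge : Q⟦(0 : ℤ)⟧ ∈ w.ge := w.shift_mem_ge (w.mem_ge_of_distinguished
    (rot_of_distTriang _ hQ) (w.decomp₀_R_mem_ge _) (w.decomp₁ _).mem_ge) le_rfl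
  obtain ⟨γ, hγ, -⟩ := complete_distinguished_triangle_morphism T _ hT hQ
    (w.decomp₁ T.obj₁).π (w.decomp₀ T.obj₂).π
    (by simp only [Triangle.mk, ← assoc, π_truncMap]; simp only [assoc, π_truncComparison])
  obtain ⟨ξ, hξγ⟩ := (w.decomp₀ T.obj₃).exists_desc hQ_ge le_rfl γ
  have hξ : w.truncMap T.mor₂ ≫ w.truncComparison T.obj₃ ≫ ξ = w.truncComparison T.obj₂ ≫ q :=
    (w.decomp₁ T.obj₂).hom_ext hQ_ge zero_lt_one (by
      rw [← assoc, π_truncMap, assoc, ← assoc _ _ ξ, π_truncComparison, hξγ, ← assoc,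
        π_truncComparison]
      exact hγ)
  refine ⟨w.truncComparison T.obj₃ ≫ ξ ≫ g', truncComparison_comp_mem _, ?_⟩
  rw [← assoc (w.truncComparison T.obj₃), ← assoc, hξ, assoc, ← hg']

variable (w) in
lemma isCohomological_virtualTrunc (M : C) : IsCohomological C (w.virtualTrunc M) := by
  intro T hT
  rw [ShortComplex.ab_exact_iff]
  intro h hh
  obtain ⟨h', hh', hh'h⟩ :=
    exists_truncMap_comp_eq_of_distinguished hT h.2 (congrArg Subtype.val hh)
  exact ⟨⟨h', hh'⟩, Subtype.ext hh'h⟩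

end

section

variable (w : WeightStructure C) in
def IsSmashing [HasCoproducts.{v} C] : Prop :=
  ∀ {ι : Type v} (X : ι → C), (∀ i, X i ∈ w.ge) → (∐ X) ∈ w.ge

variable {w : WeightStructure C} [HasCoproducts.{v} C] {M : C} {ι : Type v} (X : ι → C)

lemma IsSmashing.sigma_decomp₀_R_mem_ge (hw : w.IsSmashing) :
    (∐ fun i => (w.decomp₀ (X i)).R)⟦(0 : ℤ)⟧ ∈ w.ge :=
  w.shift_mem_ge (hw _ fun _ => w.decomp₀_R_mem_ge _) le_rfl

lemma IsSmashing.sigma_decomp₁_R_shift_mem_ge (hw : w.IsSmashing) :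
    (∐ fun i => (w.decomp₁ (X i)).R)⟦(1 : ℤ)⟧ ∈ w.ge :=
  w.mem_ge_of_iso (asIso (sigmaComparison (shiftFunctor C (1 : ℤ)) _)).symm
    (hw _ fun i => (w.decomp₁ (X i)).mem_ge)

lemma exists_virtualTruncMap_sigma_eq (hw : w.IsSmashing) (t : ∀ i, w.virtualTruncGroup M (X i)) :
    ∃ h : w.virtualTruncGroup M (∐ X), ∀ i, w.virtualTruncMap M (Sigma.ι X i) h = t i := by
  have hP := hw.sigma_decomp₀_R_mem_ge X
  obtain ⟨r, hr⟩ := (w.decomp₁ (∐ X)).exists_desc hP zero_le_one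
    (Limits.Sigma.map fun i => (w.decomp₀ (X i)).π)
  choose g hg using fun i => mem_virtualTruncGroup.1 (t i).2
  have hr_eq : r = w.truncComparison (∐ X) ≫ (w.decomp₀ (∐ X)).desc hP le_rfl _ :=
    (w.decomp₁ _).hom_ext hP zero_lt_one (by
      rw [hr, ← assoc, π_truncComparison, Decomposition.π_desc])
  refine ⟨⟨r ≫ Sigma.desc g, by rw [hr_eq, assoc]; exact truncComparison_comp_mem _⟩,
    fun i => Subtype.ext ?_⟩
  have hr_ι : w.truncMap (Sigma.ι X i) ≫ r =
      w.truncComparison (X i) ≫ Sigma.ι (fun i => (w.decomp₀ (X i)).R) i :=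
    (w.decomp₁ (X i)).hom_ext hP zero_lt_one (by
      rw [← assoc, π_truncMap, assoc, hr, Sigma.ι_map, ← assoc, π_truncComparison])
  change w.truncMap (Sigma.ι X i) ≫ r ≫ Sigma.desc g = (t i).1
  rw [← assoc, hr_ι, assoc, Sigma.ι_desc, hg]

lemma eq_zero_of_virtualTruncMap_sigma_eq_zero (hw : w.IsSmashing) (h : w.virtualTruncGroup M (∐ X))
    (h₀ : ∀ i, w.virtualTruncMap M (Sigma.ι X i) h = 0) : h = 0 := by
  obtain ⟨h, hh⟩ := h
  obtain ⟨g, rfl⟩ := mem_virtualTruncGroup.1 hh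
  refine Subtype.ext ?_
  have hP := hw.sigma_decomp₀_R_mem_ge X
  obtain ⟨r, hr⟩ := (w.decomp₁ (∐ X)).exists_desc hP zero_le_one
    (Limits.Sigma.map fun i => (w.decomp₀ (X i)).π)
  let c (i : ι) := (w.decomp₀ (X i)).desc (w.decomp₀ (∐ X)).mem_ge le_rfl
    (Sigma.ι X i ≫ (w.decomp₀ (∐ X)).π)
  have hrc : r ≫ Sigma.desc c = w.truncComparison (∐ X) :=
    (w.decomp₁ _).hom_ext (w.decomp₀ _).mem_ge zero_lt_one (by
      rw [← assoc, hr, π_truncComparison]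
      ext i
      rw [Sigma.ι_map_assoc, Sigma.ι_desc, Decomposition.π_desc])
  let s := Limits.Sigma.map fun i => w.truncComparison (X i)
  have hsc : s ≫ Sigma.desc c ≫ g = 0 := by
    ext i
    rw [Sigma.ι_map_assoc, Sigma.ι_desc_assoc, ← assoc, ← truncMap_truncComparison_eq, assoc,
      comp_zero]
    exact congrArg Subtype.val (h₀ i)
  obtain ⟨K, q, δ, hK⟩ := distinguished_cocone_triangle s
  obtain ⟨k, hk⟩ : ∃ k : K ⟶ M, Sigma.desc c ≫ g = q ≫ k := Triangle.yoneda_exact₂ _ hK _ hsc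
  have hsq : s ≫ q = 0 := comp_distTriang_mor_zero₁₂ _ hK
  have hK_ge : K⟦(0 : ℤ)⟧ ∈ w.ge := w.shift_mem_ge (w.mem_ge_of_distinguished
    (rot_of_distTriang _ hK) (hw _ fun _ => w.decomp₀_R_mem_ge _)
    (hw.sigma_decomp₁_R_shift_mem_ge X)) le_rfl
  have hrq : r ≫ q = 0 :=
    (w.decomp₁ _).hom_ext hK_ge zero_lt_one (by
      rw [comp_zero, ← assoc, hr]
      ext i
      rw [Sigma.ι_map_assoc, comp_zero, ← π_truncComparison, assoc,
        ← Sigma.ι_map_assoc (fun i => w.truncComparison (X i)), hsq, comp_zero, comp_zero])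
  change w.truncComparison (∐ X) ≫ g = 0
  rw [← hrc, assoc, hk, ← assoc, hrq, zero_comp]

variable (w) in
lemma preservesLimitsOfShape_virtualTrunc (hw : w.IsSmashing) (M : C) (ι : Type v) :
    PreservesLimitsOfShape (Discrete ι) (w.virtualTrunc M) := by
  have (f : ι → Cᵒᵖ) : PreservesLimit (Discrete.functor f) (w.virtualTrunc M) := by
    let X i := (f i).unop
    refine preservesLimit_of_preserves_limit_cone (Cofan.IsColimit.op (coproductIsCoproduct X))
      (isLimitOfReflects (forget _) ((Types.isLimit_iff _).2 fun s _ => ?_).some)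
    obtain ⟨h, hh⟩ := exists_virtualTruncMap_sigma_eq X hw fun i => s ⟨i⟩
    refine ⟨h, fun ⟨i⟩ => hh i, fun (h' : w.virtualTruncGroup M (∐ X)) hh' =>
      (sub_eq_zero.1 (eq_zero_of_virtualTruncMap_sigma_eq_zero X hw (h' - h) fun i => ?_) :
        h' = h)⟩
    rw [map_sub, sub_eq_zero]
    exact (hh' ⟨i⟩).trans (hh i).symm
  exact preservesLimitsOfShape_of_discrete _

end

section

variable {w : WeightStructure C} {L M : C} (Θ : preadditiveYoneda.obj L ≅ w.virtualTrunc M)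

noncomputable def representationEquiv (T : C) : (T ⟶ L) ≃+ w.virtualTruncGroup M T :=
  (Θ.app (op T)).addCommGroupIsoToAddEquiv

lemma coe_representationEquiv {T : C} (f : T ⟶ L) :
    (representationEquiv Θ T f : (w.decomp₁ T).R ⟶ M) =
      w.truncMap f ≫ (representationEquiv Θ L (𝟙 L) : (w.decomp₁ L).R ⟶ M) := by
  have h : representationEquiv Θ T (f ≫ 𝟙 L) =
      w.virtualTruncMap M f (representationEquiv Θ L (𝟙 L)) :=
    ConcreteCategory.congr_hom (Θ.hom.naturality f.op) (𝟙 L)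
  rw [comp_id] at h
  rw [h, coe_virtualTruncMap]

noncomputable def truncationHom : L ⟶ M :=
  (w.decomp₁ L).π ≫ (representationEquiv Θ L (𝟙 L) : (w.decomp₁ L).R ⟶ M)

lemma comp_truncationHom {T : C} (f : T ⟶ L) :
    f ≫ truncationHom Θ = (w.decomp₁ T).π ≫ (representationEquiv Θ T f : (w.decomp₁ T).R ⟶ M) := by
  rw [coe_representationEquiv, truncationHom, ← assoc, ← assoc, π_truncMap]

lemma mem_ge_of_representation (Θ : preadditiveYoneda.obj L ≅ w.virtualTrunc M) : L ∈ w.ge := by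
  refine w.mem_ge_of_hom_eq_zero fun W hW f => (representationEquiv Θ W).map_eq_zero_iff.1 ?_
  obtain ⟨g, hg⟩ := mem_virtualTruncGroup.1 (representationEquiv Θ W f).2
  rw [w.truncComparison_eq_zero_of_shift_mem_le hW, zero_comp] at hg
  exact Subtype.ext hg.symm

lemma exists_comp_truncationHom_eq {T : C} (hT : T ∈ w.ge) (z : T ⟶ M) :
    ∃ t : T ⟶ L, t ≫ truncationHom Θ = z := by
  obtain ⟨σ, hσ⟩ := (w.decomp₀ T).exists_desc (w.shift_mem_ge hT le_rfl) le_rfl (𝟙 T)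
  refine ⟨(representationEquiv Θ T).symm ⟨_, truncComparison_comp_mem (σ ≫ z)⟩, ?_⟩
  rw [comp_truncationHom, AddEquiv.apply_symm_apply, ← assoc, π_truncComparison, ← assoc, hσ,
    id_comp]

lemma eq_zero_of_comp_truncationHom_eq_zero {T : C} (hT : T⟦(1 : ℤ)⟧ ∈ w.ge) (f : T ⟶ L)
    (hf : f ≫ truncationHom Θ = 0) : f = 0 :=
  (representationEquiv Θ T).map_eq_zero_iff.1 (Subtype.ext (eq_zero_of_π_comp_eq_zero hT
    (representationEquiv Θ T f).2 ((comp_truncationHom Θ f).symm.trans hf)))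

lemma exists_truncation_of_representation (Θ : preadditiveYoneda.obj L ≅ w.virtualTrunc M) :
    ∃ (L' R : C) (f : L' ⟶ M) (g : M ⟶ R) (δ : R ⟶ L'⟦(1 : ℤ)⟧),
      Triangle.mk f g δ ∈ distTriang C ∧ L' ∈ w.ge ∧ ∀ T ∈ w.ge, ∀ x : T ⟶ R, x = 0 := by
  obtain ⟨R, g, δ, hLMR⟩ := distinguished_cocone_triangle (truncationHom Θ)
  refine ⟨L, R, _, g, δ, hLMR, mem_ge_of_representation Θ, fun T hT x =>
    Pretriangulated.hom_eq_zero_of_surjective_of_injective hLMR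
      (exists_comp_truncationHom_eq Θ hT) (fun f => eq_zero_of_comp_truncationHom_eq_zero Θ ?_ f) x⟩
  exact w.mem_ge_of_iso ((shiftFunctorCompIsoId C (-1 : ℤ) 1 (by norm_num)).app T) hT

end

variable (w : WeightStructure C)

noncomputable def rightAdjacentTStructure
    (h : ∀ M : C, ∃ (L R : C) (f : L ⟶ M) (g : M ⟶ R) (δ : R ⟶ L⟦(1 : ℤ)⟧),
      Triangle.mk f g δ ∈ distTriang C ∧ L ∈ w.ge ∧ ∀ T ∈ w.ge, ∀ x : T ⟶ R, x = 0) :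
    HomTStructure C where
  le := {Y | ∀ X ∈ w.ge, ∀ f : X⟦(1 : ℤ)⟧ ⟶ Y, f = 0}
  ge := w.ge
  le_iso _ _ e hY X hX f := (Preadditive.IsIso.comp_right_eq_zero f e.hom).1 (hY X hX _)
  ge_iso _ _ e h := w.mem_ge_of_iso e h
  le_shift Y hY X hX f := by
    have := hY _ (w.ge_shift X hX)
      (f⟦(1 : ℤ)⟧' ≫ (shiftFunctorCompIsoId C (-1 : ℤ) 1 (by norm_num)).hom.app Y)
    rwa [Preadditive.IsIso.comp_right_eq_zero, Functor.map_eq_zero_iff] at this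
  ge_shift := w.ge_shift
  orth X Y hX hY f := (Preadditive.IsIso.comp_left_eq_zero
    ((shiftFunctorCompIsoId C (-1 : ℤ) 1 (by norm_num)).hom.app X) f).1 (hY _ hX _)
  decomp M := by
    obtain ⟨L, R, f, g, δ, hT, hL, hR⟩ := h M
    refine ⟨L, R, f, g, δ, hT, hL, fun X hX u => ?_⟩
    rw [← (shiftFunctor C (1 : ℤ)).map_preimage u, hR X hX (Functor.preimage _ u), Functor.map_zero]

end WeightStructure

/-- Brown representability + smashing weight structure ⟹ existence of a right adjacent
t-structure. -/
theorem exists_right_adjacent_tStructure [HasCoproducts.{v} C]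
    (brown : ∀ (H : Cᵒᵖ ⥤ AddCommGrpCat.{v}) [H.Additive], IsCohomological C H →
      (∀ ι : Type v, PreservesLimitsOfShape (Discrete ι) H) →
      ∃ X : C, Nonempty (preadditiveYoneda.obj X ≅ H))
    (w : WeightStructure C)
    (hw : ∀ {ι : Type v} (X : ι → C), (∀ i, X i ∈ w.ge) → (∐ X) ∈ w.ge) :
    ∃ t : HomTStructure C, t.ge = w.ge := by
  refine ⟨w.rightAdjacentTStructure fun M => ?_, rfl⟩
  obtain ⟨L, ⟨Θ⟩⟩ := brown (w.virtualTrunc M) (w.isCohomological_virtualTrunc M)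
    (w.preservesLimitsOfShape_virtualTrunc hw M)
  exact WeightStructure.exists_truncation_of_representation Θ
end

section
/- Let C be a smashing triangulated category and A a class of objects closed under extensions and under small coproducts, and closed under either the shift [1] or the shift [-1]. Then A is retraction-closed in C: any retract (direct summand) of an object of A lies in A. -/
open CategoryTheory Category Limits Pretriangulated ZeroObject Opposite

universe v u u₂ v₂

variable (C : Type u) [Category.{v} C] [Preadditive C] [HasZeroObject C]
  [HasShift C ℤ] [∀ n : ℤ, (CategoryTheory.shiftFunctor C n).Additive] [Pretriangulated C]

/-! If `s ≫ r = 𝟙 X` with `s : X ⟶ Y`, put `W = ∐ₙ Y` and `e = r ≫ s`. The map `W ⟶ W` that keeps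
the part `𝟙 - e` of the `n`-th summand and moves its part `e` to the `(n + 1)`-st one is a split
monomorphism whose cokernel is the part `e` of summand `0`, that is `X`: so `W ≅ X ⊞ W`
(Eilenberg swindle). The split triangles `X ⟶ W ⟶ W ⟶ X⟦1⟧` and `W ⟶ W ⟶ X ⟶ W⟦1⟧`, rotated,
place `X` between `W⟦-1⟧` and `W`, or between `W` and `W⟦1⟧`, and `W ∈ A` as a coproduct of
objects of `A`. -/

universe w

open Preadditive

noncomputable section Swindle

variable {D : Type*} [Category D]

abbrev natCopies (Y : D) [HasCoproduct fun _ : ULift.{w} ℕ => Y] : D :=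
  ∐ fun _ : ULift.{w} ℕ => Y

variable {X Y : D} [HasCoproduct fun _ : ULift.{w} ℕ => Y]

abbrev natCopies.ι (n : ℕ) : Y ⟶ natCopies.{w} Y :=
  Sigma.ι (fun _ : ULift.{w} ℕ => Y) ⟨n⟩

lemma natCopies.hom_ext {Z : D} {f g : natCopies.{w} Y ⟶ Z}
    (h : ∀ n, natCopies.ι n ≫ f = natCopies.ι n ≫ g) : f = g :=
  Sigma.hom_ext _ _ fun ⟨n⟩ => h n

variable [Preadditive D] (s : X ⟶ Y) (r : Y ⟶ X)

def swindleShift : natCopies.{w} Y ⟶ natCopies.{w} Y :=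
  Sigma.desc fun j => (𝟙 Y - r ≫ s) ≫ natCopies.ι j.down + r ≫ s ≫ natCopies.ι (j.down + 1)

def swindleUnshift : natCopies.{w} Y ⟶ natCopies.{w} Y :=
  Sigma.desc fun
    | ⟨0⟩ => (𝟙 Y - r ≫ s) ≫ natCopies.ι 0
    | ⟨n + 1⟩ => (𝟙 Y - r ≫ s) ≫ natCopies.ι (n + 1) + r ≫ s ≫ natCopies.ι n

def swindleFst : natCopies.{w} Y ⟶ X :=
  Sigma.desc fun
    | ⟨0⟩ => r
    | ⟨_ + 1⟩ => 0

variable {s r}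

lemma swindleFst_comp_add_swindleUnshift_comp (hsr : s ≫ r = 𝟙 X) :
    swindleFst r ≫ s ≫ natCopies.ι 0 + swindleUnshift s r ≫ swindleShift s r =
      𝟙 (natCopies.{w} Y) := by
  refine natCopies.hom_ext fun n => ?_
  cases n <;>
    simp [swindleShift, swindleUnshift, swindleFst, sub_comp, comp_sub, comp_add,
      reassoc_of% hsr]

def swindleBicone (hsr : s ≫ r = 𝟙 X) : BinaryBicone X (natCopies.{w} Y) where
  pt := natCopies.{w} Y
  fst := swindleFst r
  snd := swindleUnshift s r
  inl := s ≫ natCopies.ι 0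
  inr := swindleShift s r
  inl_fst := by simp [swindleFst, hsr]
  inl_snd := by simp [swindleUnshift, comp_sub, reassoc_of% hsr]
  inr_fst := by
    refine natCopies.hom_ext fun n => ?_
    cases n <;> simp [swindleShift, swindleFst, sub_comp, add_comp, hsr]
  inr_snd := by
    refine natCopies.hom_ext fun n => ?_
    cases n <;>
      simp [swindleShift, swindleUnshift, sub_comp, comp_sub, add_comp, comp_add,
        reassoc_of% hsr]

def isBilimitSwindleBicone (hsr : s ≫ r = 𝟙 X) : (swindleBicone.{w} hsr).IsBilimit :=
  isBinaryBilimitOfTotal _ (swindleFst_comp_add_swindleUnshift_comp hsr)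

lemma IsRetract.nonempty_natCopies_iso_biprod (h : IsRetract X Y)
    [HasBinaryBiproduct X (natCopies.{w} Y)] :
    Nonempty (natCopies.{w} Y ≅ X ⊞ natCopies.{w} Y) :=
  let ⟨_, _, hsr⟩ := h
  ⟨biprod.uniqueUpToIso _ _ (isBilimitSwindleBicone.{w} hsr)⟩

end Swindle

section ExtensionClosed

variable {C}

lemma distinguished_of_iso_biprod {X Y Z : C} (e : Y ≅ X ⊞ Z) :
    Triangle.mk (biprod.inl ≫ e.inv) (e.hom ≫ biprod.snd) (0 : Z ⟶ X⟦(1 : ℤ)⟧) ∈ distTriang C :=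
  isomorphic_distinguished _ (binaryBiproductTriangle_distinguished X Z) _
    -- `Triangle.mk` is not reducible: `simp` needs the `show`s to see the objects `X`, `Z`.
    (Triangle.isoMk _ _ (Iso.refl X) e (Iso.refl Z)
      (by show (biprod.inl ≫ e.inv) ≫ e.hom = 𝟙 X ≫ biprod.inl; simp)
      (by show (e.hom ≫ biprod.snd) ≫ 𝟙 Z = e.hom ≫ biprod.snd; simp)
      (by show (0 : Z ⟶ X⟦(1 : ℤ)⟧) ≫ (𝟙 X)⟦(1 : ℤ)⟧' = 𝟙 Z ≫ 0; simp))

variable {A : Set C}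

lemma mem_of_iso_biprod_of_shift_one_mem
    (hext : ∀ (T : Triangle C), T ∈ (distTriang C) → T.obj₁ ∈ A → T.obj₃ ∈ A → T.obj₂ ∈ A)
    {W X : C} (e : W ≅ W ⊞ X) (hW : W ∈ A)
    (hW₁ : W⟦(1 : ℤ)⟧ ∈ A) : X ∈ A :=
  hext _ (rot_of_distTriang _ (distinguished_of_iso_biprod e)) hW hW₁

lemma mem_of_iso_biprod_of_shift_neg_one_mem
    (hext : ∀ (T : Triangle C), T ∈ (distTriang C) → T.obj₁ ∈ A → T.obj₃ ∈ A → T.obj₂ ∈ A)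
    {W X : C} (e : W ≅ X ⊞ W) (hW : W ∈ A)
    (hW₁ : W⟦(-1 : ℤ)⟧ ∈ A) : X ∈ A :=
  hext _ (inv_rot_of_distTriang _ (distinguished_of_iso_biprod e)) hW₁ hW

end ExtensionClosed

theorem retraction_closed_of_ext_coprod_shift [HasCoproducts.{v} C] (A : Set C)
    (hext : ∀ (T : Triangle C), T ∈ (distTriang C) → T.obj₁ ∈ A → T.obj₃ ∈ A → T.obj₂ ∈ A)
    (hcoprod : ∀ {ι : Type v} (X : ι → C), (∀ i, X i ∈ A) → (∐ X) ∈ A)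
    (hshift : (∀ X ∈ A, X⟦(1 : ℤ)⟧ ∈ A) ∨ (∀ X ∈ A, X⟦(-1 : ℤ)⟧ ∈ A))
    (X Y : C) (h : IsRetract X Y) (hY : Y ∈ A) : X ∈ A := by
  obtain ⟨e⟩ := h.nonempty_natCopies_iso_biprod.{v}
  have hW : natCopies.{v} Y ∈ A := hcoprod _ fun _ => hY
  rcases hshift with hshift | hshift
  · exact mem_of_iso_biprod_of_shift_one_mem hext (e ≪≫ biprod.braiding _ _) hW (hshift _ hW)
  · exact mem_of_iso_biprod_of_shift_neg_one_mem hext e hW (hshift _ hW)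
end
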